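/- Let A, B be nonempty closed convex subsets of a reflexive Banach space X with A bounded. Then the sets A₀ = {a ∈ A : ‖a − b‖ = dist(A,B) for some b ∈ B} and B₀ = {b ∈ B : ‖a − b‖ = dist(A,B) for some a ∈ A} are nonempty. -/

import Mathlib

open Filter Topology Metric NormedSpace

section Aux

variable {X : Type*} [NormedAddCommGroup X] [NormedSpace ℝ X]

/-- closed convex sets are weakly closed -/
lemma weakClosed {s : Set X} (hs : Convex ℝ s) (hc : IsClosed s) :
    IsClosed (toWeakSpace ℝ X '' s) := by
  have h := hs.toWeakSpace_closure (𝕜 := ℝ)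
  rw [hc.closure_eq] at h
  rw [h]
  exact isClosed_closure

/-- in a reflexive space, closed balls are weakly compact -/
lemma weakCompactBall (hrefl : Function.Surjective (NormedSpace.inclusionInDoubleDual ℝ X))
    (r : ℝ) :
    IsCompact (toWeakSpace ℝ X '' closedBall 0 r) := by
  set J := inclusionInDoubleDual ℝ X
  have hJnorm : ∀ x : X, ‖J x‖ = ‖x‖ := fun x =>
    (inclusionInDoubleDualLi (𝕜 := ℝ) (E := X)).norm_map x
  have hJinj : Function.Injective J := fun x y hxy => by
    have : ‖x - y‖ = 0 := by rw [← hJnorm, map_sub, hxy, sub_self]; exact ContinuousLinearMap.opNorm_zero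
    simpa [sub_eq_zero] using this
  set g : StrongDual ℝ (StrongDual ℝ X) → X := Function.surjInv hrefl with hg
  have hgJ : ∀ x, g (J x) = x := fun x => hJinj (Function.surjInv_eq hrefl (J x))
  have hJg : ∀ φ, J (g φ) = φ := fun φ => Function.surjInv_eq hrefl φ
  have hcont : Continuous (fun φ : WeakDual ℝ (StrongDual ℝ X) => toWeakSpace ℝ X (g φ)) := by
    apply WeakBilin.continuous_of_continuous_eval
    intro f
    have : (fun φ : WeakDual ℝ (StrongDual ℝ X) =>
        (topDualPairing ℝ X).flip (toWeakSpace ℝ X (g φ)) f)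
        = fun φ : WeakDual ℝ (StrongDual ℝ X) => topDualPairing ℝ (StrongDual ℝ X) φ f := by
      funext φ
      show f (g φ) = φ f
      calc f (g φ) = J (g φ) f := rfl
        _ = φ f := DFunLike.congr_fun (hJg φ) f
    rw [this]
    exact WeakBilin.eval_continuous _ f
  have himg : toWeakSpace ℝ X '' closedBall 0 r
      = (fun φ : WeakDual ℝ (StrongDual ℝ X) => toWeakSpace ℝ X (g φ)) ''
        (WeakDual.toStrongDual ⁻¹' closedBall 0 r) := by
    ext y
    constructor
    · rintro ⟨x, hx, rfl⟩
      refine ⟨J x, ?_, by show toWeakSpace ℝ X (g (J x)) = toWeakSpace ℝ X x; rw [hgJ]⟩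
      simp only [Set.mem_preimage, mem_closedBall, dist_zero_right] at hx ⊢
      show dist (J x) 0 ≤ r
      exact (dist_zero_right (J x)).trans_le ((hJnorm x).trans_le hx)
    · rintro ⟨φ, hφ, rfl⟩
      refine ⟨g φ, ?_, rfl⟩
      simp only [Set.mem_preimage, mem_closedBall, dist_zero_right] at hφ ⊢
      rw [← hJnorm, show J (g φ) = WeakDual.toStrongDual φ from hJg φ]
      exact (dist_zero_right (WeakDual.toStrongDual φ)).symm.trans_le hφ
  rw [himg]
  exact (WeakDual.isCompact_closedBall (𝕜 := ℝ) (E := StrongDual ℝ X) 0 r).image hcont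

end Aux

/-- `setDist A B = inf {‖a - b‖ : a ∈ A, b ∈ B}`. -/
noncomputable def setDist {X : Type*} [NormedAddCommGroup X] (A B : Set X) : ℝ :=
  sInf {d : ℝ | ∃ a ∈ A, ∃ b ∈ B, d = ‖a - b‖}

theorem stmt19 {X : Type*} [NormedAddCommGroup X] [NormedSpace ℝ X]
    [CompleteSpace X]
    (hrefl : Function.Surjective (NormedSpace.inclusionInDoubleDual ℝ X))
    (A B : Set X) (hA : A.Nonempty) (hB : B.Nonempty)
    (hAcl : IsClosed A) (hBcl : IsClosed B) (hAconv : Convex ℝ A) (hBconv : Convex ℝ B)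
    (hAbd : Bornology.IsBounded A) :
    {a ∈ A | ∃ b ∈ B, ‖a - b‖ = setDist A B}.Nonempty ∧
      {b ∈ B | ∃ a ∈ A, ‖a - b‖ = setDist A B}.Nonempty := by
  classical
  obtain ⟨a₀, ha₀⟩ := hA
  obtain ⟨b₀, hb₀⟩ := hB
  set S := {d : ℝ | ∃ a ∈ A, ∃ b ∈ B, d = ‖a - b‖} with hSdef
  set d := setDist A B with hd
  have hdS : d = sInf S := rfl
  have hSne : S.Nonempty := ⟨‖a₀ - b₀‖, a₀, ha₀, b₀, hb₀, rfl⟩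
  have hSbdd : BddBelow S := ⟨0, by rintro x ⟨a, -, b, -, rfl⟩; exact norm_nonneg _⟩
  have hdle : ∀ a ∈ A, ∀ b ∈ B, d ≤ ‖a - b‖ := fun a ha b hb =>
    csInf_le hSbdd ⟨a, ha, b, hb, rfl⟩
  obtain ⟨MA, hMA⟩ := hAbd.subset_closedBall 0
  set R := MA + (d + 1) with hR
  have happrox : ∀ n : ℕ, ∃ a ∈ A, ∃ b ∈ B, ‖a - b‖ < d + 1 / (n + 1) := by
    intro n
    have hpos : (0 : ℝ) < 1 / (n + 1) := by positivity
    have hlt : sInf S < d + 1 / (n + 1) := by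
      rw [← hdS]; exact lt_add_of_pos_right d hpos
    obtain ⟨x, hxS, hxlt⟩ := exists_lt_of_csInf_lt hSne hlt
    obtain ⟨a, ha, b, hb, rfl⟩ := hxS
    exact ⟨a, ha, b, hb, hxlt⟩
  set ι := toWeakSpace ℝ X with hι
  have hKA : IsCompact (ι '' A) :=
    (weakCompactBall hrefl MA).of_isClosed_subset (weakClosed hAconv hAcl)
      (Set.image_mono hMA)
  have hKB : IsCompact (ι '' (B ∩ closedBall 0 R)) :=
    (weakCompactBall hrefl R).of_isClosed_subset
      (weakClosed (hBconv.inter (convex_closedBall 0 R)) (hBcl.inter isClosed_closedBall))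
      (Set.image_mono Set.inter_subset_right)
  set K := (ι '' A) ×ˢ (ι '' (B ∩ closedBall 0 R)) with hK
  have hKc : IsCompact K := hKA.prod hKB
  set Z : ℕ → Set (WeakSpace ℝ X × WeakSpace ℝ X) := fun n =>
    (fun p : WeakSpace ℝ X × WeakSpace ℝ X => p.1 - p.2) ⁻¹'
      (ι '' closedBall 0 (d + 1 / (n + 1))) with hZ
  have hZc : ∀ n, IsClosed (Z n) := fun n =>
    (weakClosed (convex_closedBall _ _) isClosed_closedBall).preimage
      (continuous_fst.sub continuous_snd)
  have hFIP : ∀ u : Finset ℕ, (K ∩ ⋂ i ∈ u, Z i).Nonempty := by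
    intro u
    set n := u.sup id with hn
    obtain ⟨a, ha, b, hb, hab⟩ := happrox n
    have haM : ‖a‖ ≤ MA := by
      have := hMA ha
      rwa [mem_closedBall, dist_zero_right] at this
    have h1n : 1 / ((n : ℝ) + 1) ≤ 1 := by
      rw [div_le_one (by positivity)]
      linarith [Nat.cast_nonneg (α := ℝ) n]
    have hbR : b ∈ closedBall (0 : X) R := by
      rw [mem_closedBall, dist_zero_right]
      calc ‖b‖ = ‖a - (a - b)‖ := by rw [sub_sub_cancel]
        _ ≤ ‖a‖ + ‖a - b‖ := norm_sub_le _ _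
        _ ≤ MA + (d + 1) := by
            have : ‖a - b‖ ≤ d + 1 := le_trans hab.le (by linarith)
            linarith
    refine ⟨(ι a, ι b), ⟨⟨a, ha, rfl⟩, ⟨b, ⟨hb, hbR⟩, rfl⟩⟩, ?_⟩
    simp only [Set.mem_iInter]
    intro i hi
    have hin : i ≤ n := Finset.le_sup (f := id) hi
    have hmono : 1 / ((n : ℝ) + 1) ≤ 1 / ((i : ℝ) + 1) := by
      apply one_div_le_one_div_of_le (by positivity)
      exact_mod_cast by omega
    refine ⟨a - b, ?_, (map_sub ι a b).symm⟩
    rw [mem_closedBall, dist_zero_right]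
    linarith [hab]
  obtain ⟨p, hpK, hpZ⟩ := hKc.inter_iInter_nonempty Z hZc hFIP
  obtain ⟨⟨a, ha, hpa⟩, ⟨b, hbmem, hpb⟩⟩ := hpK
  have hball : ∀ n : ℕ, ‖a - b‖ ≤ d + 1 / (n + 1) := by
    intro n
    have hpn := Set.mem_iInter.mp hpZ n
    have : p.1 - p.2 ∈ ι '' closedBall 0 (d + 1 / (n + 1)) := hpn
    obtain ⟨x, hx, hxe⟩ := this
    have hsub : ι (a - b) = ι x := by
      rw [map_sub, hpa, hpb, hxe]
    have : a - b = x := (toWeakSpace ℝ X).injective hsub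
    rw [mem_closedBall, dist_zero_right] at hx
    rw [this]
    exact hx
  have hled : ‖a - b‖ ≤ d := by
    refine le_of_forall_pos_le_add fun ε hε => ?_
    obtain ⟨n, hn⟩ := exists_nat_one_div_lt hε
    calc ‖a - b‖ ≤ d + 1 / (n + 1) := hball n
      _ ≤ d + ε := by linarith
  have heq : ‖a - b‖ = d := le_antisymm hled (hdle a ha b hbmem.1)
  exact ⟨⟨a, ha, b, hbmem.1, heq⟩, ⟨b, hbmem.1, a, ha, heq⟩⟩
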